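/- Let a Max-3DM-2 instance with |A| = |B| = |C| = n and a real 0 < ε < 1 be given, and construct the associated scheduling instance. If the scheduling instance admits a feasible schedule of makespan at most 63n − 3k(1−ε) for some integer 0 ≤ k ≤ n, then the Max-3DM-2 instance admits a matching of size至 least k. -/

import Mathlib

/-!  Coupled-task scheduling with compatibility constraints. -/

/-- A coupled-task `(a, L, b)`: a first sub-task of processing time `a`,
an idle period of length `L`, then a second sub-task of processing time `b`. -/
structure CTask where
  a : ℝ
  L : ℝ
  b : ℝ

namespace CTask

/-- The set of time instants occupied by the task when started at time `s`. -/
def occupied (t : CTask) (s : ℝ) : Set ℝ :=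
  Set.Ico s (s + t.a) ∪ Set.Ico (s + t.a + t.L) (s + t.a + t.L + t.b)

/-- The idle window of the task when started at time `s`. -/
def idleWindow (t : CTask) (s : ℝ) : Set ℝ :=
  Set.Ico (s + t.a) (s + t.a + t.L)

/-- The span of the task when started at time `s`. -/
def span (t : CTask) (s : ℝ) : Set ℝ :=
  Set.Ico s (s + t.a + t.L + t.b)

/-- Total duration `a + L + b` of a coupled-task. -/
def dur (t : CTask) : ℝ := t.a + t.L + t.b

/-- All three components of the task are positive. -/
def Positive (t : CTask) : Prop := 0 < t.a ∧ 0 < t.L ∧ 0 < t.b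

end CTask

/-- The stretched coupled-task with stretch factor `α`, i.e. `(α, α, α)`. -/
def stretched (α : ℝ) : CTask := ⟨α, α, α⟩

/-- A scheduling instance: a coupled-task for each index, together with a
compatibility relation.  `compat t' t` means that the compatibility graph
contains the arc `(t', t)` (so `t'` may be executed during the idle window of
`t`); an undirected edge `{t, t'}` is modelled by `compat t' t ∧ compat t t'`. -/
structure SchedInstance (ι : Type*) where
  task : ι → CTask
  compat : ι → ι → Prop

namespace SchedInstance

variable {ι : Type*}

/-- A schedule `σ` (assigning a start time to every task) is feasible if all
start times are nonnegative, occupied intervals of distinct tasks are pairwise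
disjoint, and whenever an occupied interval of `t'` meets the idle window of
`t`, the compatibility graph contains the arc (or edge) from `t'` to `t`. -/
def Feasible (I : SchedInstance ι) (σ : ι → ℝ) : Prop :=
  (∀ t, 0 ≤ σ t) ∧
  (∀ t t', t ≠ t' →
    Disjoint ((I.task t).occupied (σ t)) ((I.task t').occupied (σ t'))) ∧
  (∀ t t', t ≠ t' →
    (((I.task t').occupied (σ t')) ∩ ((I.task t).idleWindow (σ t))).Nonempty →
      I.compat t' t)

/-- Completion time of task `t` under schedule `σ`. -/
def endTime (I : SchedInstance ι) (σ : ι → ℝ) (t : ι) : ℝ :=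
  σ t + (I.task t).dur

/-- The makespan of `σ` is at most `C`. -/
def MakespanLE (I : SchedInstance ι) (σ : ι → ℝ) (C : ℝ) : Prop :=
  ∀ t, I.endTime σ t ≤ C

/-- The makespan of `σ` is exactly `C`. -/
def MakespanEq (I : SchedInstance ι) (σ : ι → ℝ) (C : ℝ) : Prop :=
  I.MakespanLE σ C ∧ ∃ t, I.endTime σ t = C

end SchedInstance

/-- An instance of Max-3DM-2: pairwise disjoint finite sets `A`, `B`, `C` of
equal cardinality and a set `T ⊆ A × B × C` of triples such that every element
of `A ∪ B ∪ C` occurs in exactly two triples of `T`. -/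
structure Max3DM2 (U : Type*) [DecidableEq U] where
  A : Finset U
  B : Finset U
  C : Finset U
  T : Finset (U × U × U)
  disjAB : Disjoint A B
  disjAC : Disjoint A C
  disjBC : Disjoint B C
  cardB : B.card = A.card
  cardC : C.card = A.card
  memT : ∀ t ∈ T, t.1 ∈ A ∧ t.2.1 ∈ B ∧ t.2.2 ∈ C
  occ2 : ∀ x ∈ A ∪ B ∪ C,
    (T.filter fun t => t.1 = x ∨ t.2.1 = x ∨ t.2.2 = x).card = 2

namespace Max3DM2

variable {U : Type*} [DecidableEq U]

/-- Task indices of the associated scheduling instance: an item task for each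
element of `A ∪ B ∪ C` (left), an item task `t'ᵢ` for each triple (middle),
and a box task `tᵢ` for each triple (right). -/
abbrev Idx (P : Max3DM2 U) : Type _ :=
  {x // x ∈ P.A ∪ P.B ∪ P.C} ⊕ ({t // t ∈ P.T} ⊕ {t // t ∈ P.T})

/-- The scheduling instance associated with a Max-3DM-2 instance and `ε`:
element items have stretch factor `1`, items `t'ᵢ` have stretch factor `2 + ε`,
boxes have stretch factor `9`; the compatibility graph contains exactly the
arcs `(x, tᵢ)` for each element `x` occurring in the triple `tᵢ`, and the arcs
`(t'ᵢ, tᵢ)`. -/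
def inst (P : Max3DM2 U) (ε : ℝ) : SchedInstance P.Idx where
  task := fun i => match i with
    | .inl _ => stretched 1
    | .inr (.inl _) => stretched (2 + ε)
    | .inr (.inr _) => stretched 9
  compat := fun i j => match i, j with
    | .inl x, .inr (.inr t) =>
        t.val.1 = x.val ∨ t.val.2.1 = x.val ∨ t.val.2.2 = x.val
    | .inr (.inl t'), .inr (.inr t) => t'.val = t.val
    | _, _ => False

/-- A matching: a set of pairwise disjoint triples of `T`. -/
def IsMatching (P : Max3DM2 U) (M : Finset (U × U × U)) : Prop :=
  M ⊆ P.T ∧ ∀ p ∈ M, ∀ q ∈ M, p ≠ q →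
    p.1 ≠ q.1 ∧ p.2.1 ≠ q.2.1 ∧ p.2.2 ≠ q.2.2

end Max3DM2


/-!
A task whose occupied time meets the idle window of a box (length 9) fits entirely inside that
window, and since box spans are pairwise disjoint, every task is hosted by at most one box. The
spans of the tasks hosted by no box are pairwise disjoint and lie in `[0, C)`, so the total
duration `75n + 6εn` of all tasks is at most `C` plus the durations hosted by boxes. A box hosts at
most 9 time units, and unless it hosts all three elements of its triple, at most `3(2 + ε)`
(either `t'ᵢ` alone or at most two elements). The boxes hosting their whole triple form a matching
`M`, and the count gives `63n ≤ C + 3(1 - ε)|M|`, that is `k ≤ |M|`.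
-/

open Set MeasureTheory Finset

namespace CTask

theorem mem_occupied_self {t : CTask} (ht : 0 < t.a) (s : ℝ) : s ∈ t.occupied s :=
  Or.inl ⟨le_rfl, by linarith⟩

theorem disjoint_occupied_idleWindow (t : CTask) (s : ℝ) :
    Disjoint (t.occupied s) (t.idleWindow s) :=
  Set.disjoint_union_left.2
    ⟨Set.Ico_disjoint_Ico_same, Set.Ico_disjoint_Ico_same.symm⟩

theorem span_subset_occupied_union_idleWindow (t : CTask) (s : ℝ) :
    t.span s ⊆ t.occupied s ∪ t.idleWindow s := by
  rintro x ⟨h₁, h₂⟩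
  rcases lt_or_ge x (s + t.a) with h | h
  · exact Or.inl (Or.inl ⟨h₁, h⟩)
  rcases lt_or_ge x (s + t.a + t.L) with h' | h'
  · exact Or.inr ⟨h, h'⟩
  · exact Or.inl (Or.inr ⟨h', h₂⟩)

theorem Positive.occupied_subset_span {t : CTask} (ht : t.Positive) (s : ℝ) :
    t.occupied s ⊆ t.span s := by
  obtain ⟨ha, hL, hb⟩ := ht
  rintro x (⟨h₁, h₂⟩ | ⟨h₁, h₂⟩) <;> exact ⟨by linarith, by linarith⟩

theorem Positive.idleWindow_subset_span {t : CTask} (ht : t.Positive) (s : ℝ) :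
    t.idleWindow s ⊆ t.span s := by
  obtain ⟨ha, hL, hb⟩ := ht
  rintro x ⟨h₁, h₂⟩
  exact ⟨by linarith, by linarith⟩

theorem Positive.dur_nonneg {t : CTask} (ht : t.Positive) : 0 ≤ t.dur := by
  obtain ⟨ha, hL, hb⟩ := ht
  unfold dur
  positivity

/-- Whichever task starts later would start inside the span, hence inside the occupied set or
the idle window, of the other one. -/
theorem disjoint_span {t u : CTask} (ht : 0 < t.a) (hu : 0 < u.a) {s r : ℝ}
    (hocc : Disjoint (t.occupied s) (u.occupied r))
    (htu : Disjoint (t.occupied s) (u.idleWindow r))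
    (hut : Disjoint (u.occupied r) (t.idleWindow s)) :
    Disjoint (t.span s) (u.span r) := by
  wlog hsr : s ≤ r generalizing t u s r
  · exact (this hu ht hocc.symm hut htu (le_of_not_ge hsr)).symm
  refine Set.disjoint_left.2 fun x ⟨_, hxs⟩ ⟨hrx, _⟩ => ?_
  have hr : r ∈ t.span s := ⟨hsr, by linarith⟩
  rcases span_subset_occupied_union_idleWindow t s hr with h | h
  · exact Set.disjoint_left.1 hocc h (mem_occupied_self hu r)
  · exact Set.disjoint_left.1 hut (mem_occupied_self hu r) h

theorem volume_span (t : CTask) (s : ℝ) : volume (t.span s) = ENNReal.ofReal t.dur := by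
  rw [span, Real.volume_Ico, dur]
  congr 1
  ring

end CTask

theorem stretched_positive {α : ℝ} (hα : 0 < α) : (stretched α).Positive :=
  ⟨hα, hα, hα⟩

theorem stretched_dur (α : ℝ) : (stretched α).dur = 3 * α := by
  simp only [stretched, CTask.dur]
  ring

theorem stretched_span_subset_idleWindow {α β s w : ℝ} (hα : 0 < α) (hαβ : 3 * α ≤ β)
    (hmeet : ((stretched α).occupied s ∩ (stretched β).idleWindow w).Nonempty)
    (hdisj : Disjoint ((stretched α).occupied s) ((stretched β).occupied w)) :
    (stretched α).span s ⊆ (stretched β).idleWindow w := by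
  simp only [CTask.occupied, CTask.idleWindow, CTask.span, stretched] at *
  obtain ⟨p, hp, hp₁, hp₂⟩ := hmeet
  have hsp : s ≤ p ∧ p < s + α + α + α := by
    rcases hp with ⟨h₁, h₂⟩ | ⟨h₁, h₂⟩ <;> constructor <;> linarith
  have hstart : w + β ≤ s := by
    by_contra! h
    exact Set.disjoint_left.1 hdisj (Or.inl ⟨le_rfl, by linarith⟩)
      (Or.inl ⟨by linarith, h⟩)
  have hend : s + α + α + α ≤ w + β + β := by
    by_contra! h
    have hq₁ : max (s + α + α) (w + β + β) < s + α + α + α := max_lt (by linarith) h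
    have hq₂ : max (s + α + α) (w + β + β) < w + β + β + β := max_lt (by linarith) (by linarith)
    exact Set.disjoint_left.1 hdisj (Or.inr ⟨le_max_left .., hq₁⟩)
      (Or.inr ⟨le_max_right .., hq₂⟩)
  exact fun x ⟨hx₁, hx₂⟩ => ⟨by linarith, by linarith⟩

namespace SchedInstance

variable {ι : Type*} {I : SchedInstance ι} {σ : ι → ℝ}

def Hosts (I : SchedInstance ι) (σ : ι → ℝ) (j i : ι) : Prop :=
  ((I.task i).occupied (σ i) ∩ (I.task j).idleWindow (σ j)).Nonempty

namespace Feasible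

theorem compat_of_hosts (hσ : I.Feasible σ) {i j : ι} (h : I.Hosts σ j i) : I.compat i j := by
  obtain rfl | hij := eq_or_ne i j
  · obtain ⟨x, hx, hx'⟩ := h
    exact (Set.disjoint_left.1 (CTask.disjoint_occupied_idleWindow _ _) hx hx').elim
  · exact hσ.2.2 j i hij.symm h

theorem disjoint_span (hσ : I.Feasible σ) {i j : ι} (hi : 0 < (I.task i).a)
    (hj : 0 < (I.task j).a) (hij : i ≠ j) (hji : ¬ I.Hosts σ j i) (hij' : ¬ I.Hosts σ i j) :
    Disjoint ((I.task i).span (σ i)) ((I.task j).span (σ j)) :=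
  CTask.disjoint_span hi hj (hσ.2.1 i j hij)
    (Set.disjoint_iff_inter_eq_empty.2 (Set.not_nonempty_iff_eq_empty.1 hji))
    (Set.disjoint_iff_inter_eq_empty.2 (Set.not_nonempty_iff_eq_empty.1 hij'))

theorem span_subset_Ico (hσ : I.Feasible σ) {C : ℝ} (hC : I.MakespanLE σ C) (i : ι) :
    (I.task i).span (σ i) ⊆ Ico 0 C := by
  have hi := hC i
  simp only [endTime, CTask.dur] at hi
  exact fun x ⟨hx₁, hx₂⟩ => ⟨(hσ.1 i).trans hx₁, by linarith⟩

theorem sum_dur_le (hσ : I.Feasible σ) {s : Finset ι} (hpos : ∀ i ∈ s, (I.task i).Positive)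
    (hs : (s : Set ι).Pairwise fun i j => ¬ I.Hosts σ j i) {x y : ℝ} (hxy : x ≤ y)
    (hsub : ∀ i ∈ s, (I.task i).span (σ i) ⊆ Ico x y) :
    ∑ i ∈ s, (I.task i).dur ≤ y - x := by
  have hdisj : (s : Set ι).PairwiseDisjoint fun i => (I.task i).span (σ i) :=
    fun i hi j hj hij => hσ.disjoint_span (hpos i hi).1 (hpos j hj).1 hij (hs hi hj hij)
      (hs hj hi hij.symm)
  rw [← ENNReal.ofReal_le_ofReal_iff (sub_nonneg.2 hxy),
    ENNReal.ofReal_sum_of_nonneg fun i hi => (hpos i hi).dur_nonneg, ← Real.volume_Ico,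
    Finset.sum_congr rfl fun i _ => (CTask.volume_span _ (σ i)).symm,
    ← measure_biUnion_finset hdisj fun _ _ => measurableSet_Ico]
  exact measure_mono (Set.iUnion₂_subset hsub)

theorem sum_dur_le_makespan (hσ : I.Feasible σ) {C : ℝ} (hC : I.MakespanLE σ C) (hC₀ : 0 ≤ C)
    {s : Finset ι} (hpos : ∀ i ∈ s, (I.task i).Positive)
    (hs : ∀ i ∈ s, ∀ j, ¬ I.Hosts σ j i) :
    ∑ i ∈ s, (I.task i).dur ≤ C := by
  have h := hσ.sum_dur_le hpos (fun i hi j _ _ => hs i hi j) hC₀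
    fun i _ => hσ.span_subset_Ico hC i
  rwa [sub_zero] at h

end Feasible

end SchedInstance

namespace Max3DM2

variable {U : Type*} [DecidableEq U] {P : Max3DM2 U}

theorem card_elements (P : Max3DM2 U) : (P.A ∪ P.B ∪ P.C).card = 3 * P.A.card := by
  rw [card_union_of_disjoint (Finset.disjoint_union_left.2 ⟨P.disjAC, P.disjBC⟩),
    card_union_of_disjoint P.disjAB, P.cardB, P.cardC]
  ring

theorem card_T (P : Max3DM2 U) : P.T.card = 2 * P.A.card := by
  have hfiber : ∀ x ∈ P.A, (P.T.filter fun t => t.1 = x).card = 2 := by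
    intro x hx
    rw [← P.occ2 x (mem_union_left _ (mem_union_left _ hx))]
    congr 1
    refine Finset.filter_congr fun t ht => ⟨Or.inl, ?_⟩
    obtain ⟨-, htB, htC⟩ := P.memT t ht
    rintro (h | h | h)
    · exact h
    · exact absurd (h ▸ htB) (Finset.disjoint_left.1 P.disjAB hx)
    · exact absurd (h ▸ htC) (Finset.disjoint_left.1 P.disjAC hx)
  rw [card_eq_sum_card_fiberwise fun t ht => (P.memT t ht).1, sum_congr rfl hfiber, sum_const,
    smul_eq_mul, mul_comm]

abbrev item (x : {x // x ∈ P.A ∪ P.B ∪ P.C}) : P.Idx := .inl x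

abbrev item' (t : {t // t ∈ P.T}) : P.Idx := .inr (.inl t)

abbrev box (t : {t // t ∈ P.T}) : P.Idx := .inr (.inr t)

variable {ε : ℝ}

theorem inst_positive (hε : 0 < ε) (i : P.Idx) : ((P.inst ε).task i).Positive := by
  rcases i with x | t | t
  · exact stretched_positive one_pos
  · exact stretched_positive (by linarith)
  · exact stretched_positive (by norm_num)

theorem dur_item (x : {x // x ∈ P.A ∪ P.B ∪ P.C}) :
    ((P.inst ε).task (item x)).dur = 3 := by
  simp only [inst, stretched_dur, mul_one]

theorem dur_item' (t : {t // t ∈ P.T}) :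
    ((P.inst ε).task (item' t)).dur = 3 * (2 + ε) :=
  stretched_dur _

theorem dur_box (t : {t // t ∈ P.T}) : ((P.inst ε).task (box t)).dur = 27 := by
  simp only [inst, stretched_dur]
  norm_num

theorem sum_inst_dur (P : Max3DM2 U) (ε : ℝ) :
    ∑ i, ((P.inst ε).task i).dur = 75 * P.A.card + 6 * ε * P.A.card := by
  simp only [Fintype.sum_sum_type, dur_item, dur_item', dur_box, sum_const, card_univ,
    Fintype.card_coe, card_elements, card_T, nsmul_eq_mul]
  push_cast
  ring

theorem exists_box_of_inst_compat {i j : P.Idx} (h : (P.inst ε).compat i j) : ∃ t, j = box t := by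
  rcases i with x | t | t <;> rcases j with y | s | s
  all_goals first | exact ⟨_, rfl⟩ | exact h.elim

theorem not_inst_compat_box {t : {t // t ∈ P.T}} {j : P.Idx} : ¬ (P.inst ε).compat (box t) j := by
  rcases j with y | s | s <;> exact id

variable {σ : P.Idx → ℝ}

theorem not_hosts_box (hσ : (P.inst ε).Feasible σ) {t : {t // t ∈ P.T}} {j : P.Idx} :
    ¬ (P.inst ε).Hosts σ j (box t) :=
  fun h => not_inst_compat_box (hσ.compat_of_hosts h)

theorem span_subset_idleWindow_of_hosts (hσ : (P.inst ε).Feasible σ) (hε0 : 0 < ε)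
    (hε1 : ε < 1) {t : {t // t ∈ P.T}} {i : P.Idx} (h : (P.inst ε).Hosts σ (box t) i) :
    ((P.inst ε).task i).span (σ i) ⊆ ((P.inst ε).task (box t)).idleWindow (σ (box t)) := by
  have hdisj := hσ.2.1 i (box t) (by rintro rfl; exact not_hosts_box hσ h)
  rcases i with x | s | s
  · exact stretched_span_subset_idleWindow one_pos (by norm_num) h hdisj
  · exact stretched_span_subset_idleWindow (by linarith) (by linarith) h hdisj
  · exact (not_hosts_box hσ h).elim

/-- Box spans are pairwise disjoint, and a hosted task lies inside the span of its host. -/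
theorem eq_of_hosts (hσ : (P.inst ε).Feasible σ) (hε0 : 0 < ε) (hε1 : ε < 1)
    {t t' : {t // t ∈ P.T}} {i : P.Idx} (h : (P.inst ε).Hosts σ (box t) i)
    (h' : (P.inst ε).Hosts σ (box t') i) : t = t' := by
  by_contra hne
  have hboxes := hσ.disjoint_span (inst_positive hε0 (box t)).1 (inst_positive hε0 (box t')).1
    (by simpa using hne) (not_hosts_box hσ) (not_hosts_box hσ)
  have hi : σ i ∈ ((P.inst ε).task i).span (σ i) :=
    (inst_positive hε0 i).occupied_subset_span _
      (CTask.mem_occupied_self (inst_positive hε0 i).1 _)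
  exact Set.disjoint_left.1 hboxes
    ((inst_positive hε0 _).idleWindow_subset_span _
      (span_subset_idleWindow_of_hosts hσ hε0 hε1 h hi))
    ((inst_positive hε0 _).idleWindow_subset_span _
      (span_subset_idleWindow_of_hosts hσ hε0 hε1 h' hi))

/-- `(P.inst ε).compat (item x) (box t)` says that `x` occurs in `t`. -/
def FullBox (P : Max3DM2 U) (ε : ℝ) (σ : P.Idx → ℝ) (t : {t // t ∈ P.T}) : Prop :=
  ∀ x, (P.inst ε).compat (item x) (box t) → (P.inst ε).Hosts σ (box t) (item x)

section Counting

open Classical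

theorem sum_dur_hosted_le_nine (hσ : (P.inst ε).Feasible σ) (hε0 : 0 < ε) (hε1 : ε < 1)
    (t : {t // t ∈ P.T}) :
    ∑ i ∈ univ.filter ((P.inst ε).Hosts σ (box t)), ((P.inst ε).task i).dur ≤ 9 := by
  have h := hσ.sum_dur_le (s := univ.filter ((P.inst ε).Hosts σ (box t)))
    (x := σ (box t) + 9) (y := σ (box t) + 9 + 9)
    (fun i _ => inst_positive hε0 i) (fun i _ j hj _ hji => by
      obtain ⟨s, rfl⟩ := exists_box_of_inst_compat (hσ.compat_of_hosts hji)
      exact not_hosts_box hσ (mem_filter.1 hj).2)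
    (by linarith) fun i hi => span_subset_idleWindow_of_hosts hσ hε0 hε1 (mem_filter.1 hi).2
  linarith

theorem sum_dur_hosted_eq (hσ : (P.inst ε).Feasible σ) (t : {t // t ∈ P.T}) :
    ∑ i ∈ univ.filter ((P.inst ε).Hosts σ (box t)), ((P.inst ε).task i).dur =
      3 * #(univ.filter fun x => (P.inst ε).Hosts σ (box t) (item x)) +
        if (P.inst ε).Hosts σ (box t) (item' t) then 3 * (2 + ε) else 0 := by
  have hitem' : ∑ s, (if (P.inst ε).Hosts σ (box t) (item' s) then
      ((P.inst ε).task (item' s)).dur else 0) =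
      if (P.inst ε).Hosts σ (box t) (item' t) then 3 * (2 + ε) else 0 := by
    rw [sum_eq_single t, dur_item']
    · exact fun s _ hst => if_neg fun h =>
        hst (Subtype.ext (hσ.compat_of_hosts h : (P.inst ε).compat (item' s) (box t)))
    · simp
  rw [sum_filter, Fintype.sum_sum_type, Fintype.sum_sum_type, hitem',
    sum_eq_zero fun s _ => if_neg (not_hosts_box hσ), ← sum_filter]
  simp only [dur_item, sum_const, nsmul_eq_mul, add_zero]
  ring

theorem card_hosted_items_le_two (hσ : (P.inst ε).Feasible σ) {t : {t // t ∈ P.T}}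
    (ht : ¬ P.FullBox ε σ t) :
    #(univ.filter fun x => (P.inst ε).Hosts σ (box t) (item x)) ≤ 2 := by
  obtain ⟨y, hy, hny⟩ : ∃ y, (P.inst ε).compat (item y) (box t) ∧
      ¬ (P.inst ε).Hosts σ (box t) (item y) := by
    simpa [FullBox] using ht
  have hmem : ∀ x, (P.inst ε).compat (item x) (box t) →
      x.val ∈ ({t.val.1, t.val.2.1, t.val.2.2} : Finset U) := by
    rintro x (h | h | h) <;> simp [h]
  calc #(univ.filter fun x => (P.inst ε).Hosts σ (box t) (item x))
      ≤ #(({t.val.1, t.val.2.1, t.val.2.2} : Finset U).erase y.val) := by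
        refine card_le_card_of_injOn Subtype.val (fun x hx => ?_) Subtype.val_injective.injOn
        have hx := (mem_filter.1 hx).2
        refine mem_erase.2 ⟨fun hxy => hny ?_, hmem x (hσ.compat_of_hosts hx)⟩
        rwa [← Subtype.ext hxy]
    _ ≤ 2 := by
        have := card_le_three (a := t.val.1) (b := t.val.2.1) (c := t.val.2.2)
        rw [card_erase_of_mem (hmem y hy)]
        omega

theorem sum_dur_hosted_le (hσ : (P.inst ε).Feasible σ) (hε0 : 0 < ε) (hε1 : ε < 1)
    (t : {t // t ∈ P.T}) :
    ∑ i ∈ univ.filter ((P.inst ε).Hosts σ (box t)), ((P.inst ε).task i).dur ≤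
      3 * (2 + ε) + if P.FullBox ε σ t then 3 * (1 - ε) else 0 := by
  have h9 := sum_dur_hosted_le_nine hσ hε0 hε1 t
  split_ifs with hfull
  · linarith
  have h2 : (#(univ.filter fun x => (P.inst ε).Hosts σ (box t) (item x)) : ℝ) ≤ 2 := by
    exact_mod_cast card_hosted_items_le_two hσ hfull
  rw [sum_dur_hosted_eq hσ t] at h9 ⊢
  split_ifs at h9 ⊢
  · -- a hosted `t'` leaves no room for an element
    have h0 : #(univ.filter fun x => (P.inst ε).Hosts σ (box t) (item x)) = 0 := by
      by_contra hc
      have : (1 : ℝ) ≤ #(univ.filter fun x => (P.inst ε).Hosts σ (box t) (item x)) := by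
        exact_mod_cast Nat.one_le_iff_ne_zero.2 hc
      linarith
    rw [h0]
    norm_num
  · linarith

theorem sum_dur_hosted_le_card_fullBox (hσ : (P.inst ε).Feasible σ) (hε0 : 0 < ε)
    (hε1 : ε < 1) :
    ∑ i ∈ univ.filter (fun i => ∃ t, (P.inst ε).Hosts σ (box t) i), ((P.inst ε).task i).dur ≤
      2 * P.A.card * (3 * (2 + ε)) + 3 * (1 - ε) * #(univ.filter (P.FullBox ε σ)) := by
  have hunion : univ.filter (fun i => ∃ t, (P.inst ε).Hosts σ (box t) i) =
      univ.biUnion fun t => univ.filter ((P.inst ε).Hosts σ (box t)) := by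
    ext
    simp
  rw [hunion, sum_biUnion]
  swap
  · exact fun t _ t' _ hne => disjoint_filter.2 fun i _ h h' => hne (eq_of_hosts hσ hε0 hε1 h h')
  refine (sum_le_sum fun t _ => sum_dur_hosted_le hσ hε0 hε1 t).trans_eq ?_
  rw [sum_add_distrib, sum_const, sum_ite, sum_const, sum_const_zero, card_univ, Fintype.card_coe,
    card_T, nsmul_eq_mul, nsmul_eq_mul]
  push_cast
  ring

theorem isMatching_fullBox (hσ : (P.inst ε).Feasible σ) (hε0 : 0 < ε) (hε1 : ε < 1) :
    P.IsMatching ((univ.filter (P.FullBox ε σ)).map (Function.Embedding.subtype _)) := by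
  refine ⟨fun p hp => ?_, fun p hp q hq hpq => ?_⟩
  · obtain ⟨t, -, rfl⟩ := mem_map.1 hp
    exact t.2
  obtain ⟨t, ht, rfl⟩ := mem_map.1 hp
  obtain ⟨t', ht', rfl⟩ := mem_map.1 hq
  have hne : t ≠ t' := fun h => hpq (h ▸ rfl)
  have hshared : ∀ x, (P.inst ε).compat (item x) (box t) →
      ¬ (P.inst ε).compat (item x) (box t') := fun x h h' =>
    hne (eq_of_hosts hσ hε0 hε1 ((mem_filter.1 ht).2 x h) ((mem_filter.1 ht').2 x h'))
  obtain ⟨hA, hB, hC⟩ := P.memT t.val t.2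
  refine ⟨fun h => hshared ⟨t.val.1, by simp [hA]⟩ (Or.inl rfl) (Or.inl h.symm),
    fun h => hshared ⟨t.val.2.1, by simp [hB]⟩ (Or.inr (Or.inl rfl)) (Or.inr (Or.inl h.symm)),
    fun h => hshared ⟨t.val.2.2, by simp [hC]⟩ (Or.inr (Or.inr rfl)) (Or.inr (Or.inr h.symm))⟩

theorem sum_dur_le_card_fullBox (hσ : (P.inst ε).Feasible σ) (hε0 : 0 < ε) (hε1 : ε < 1)
    {C : ℝ} (hC : (P.inst ε).MakespanLE σ C) (hC₀ : 0 ≤ C) :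
    ∑ i, ((P.inst ε).task i).dur ≤
      C + 2 * P.A.card * (3 * (2 + ε)) + 3 * (1 - ε) * #(univ.filter (P.FullBox ε σ)) := by
  have hunhosted := hσ.sum_dur_le_makespan hC hC₀
    (s := univ.filter fun i => ¬ ∃ t, (P.inst ε).Hosts σ (box t) i)
    (fun i _ => inst_positive hε0 i) fun i hi j hji => by
      obtain ⟨t, rfl⟩ := exists_box_of_inst_compat (hσ.compat_of_hosts hji)
      exact (mem_filter.1 hi).2 ⟨t, hji⟩
  rw [← sum_filter_add_sum_filter_not univ fun i => ∃ t, (P.inst ε).Hosts σ (box t) i]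
  linarith [sum_dur_hosted_le_card_fullBox hσ hε0 hε1]

end Counting

end Max3DM2

/-- if the associated scheduling instance admits a feasible
schedule of makespan at most `63n − 3k(1 − ε)` for some integer `0 ≤ k ≤ n`,
then the Max-3DM-2 instance admits a matching of size at least `k`. -/
theorem stmt5 {U : Type*} [DecidableEq U] (P : Max3DM2 U)
    (ε : ℝ) (hε0 : 0 < ε) (hε1 : ε < 1)
    (k : ℕ) (hk : k ≤ P.A.card)
    (σ : P.Idx → ℝ) (hσ : (P.inst ε).Feasible σ)
    (hmk : (P.inst ε).MakespanLE σ (63 * (P.A.card : ℝ) - 3 * (k : ℝ) * (1 - ε))) :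
    ∃ M : Finset (U × U × U), P.IsMatching M ∧ k ≤ M.card := by
  classical
  have hkn : (k : ℝ) ≤ P.A.card := by exact_mod_cast hk
  have hdur := Max3DM2.sum_dur_le_card_fullBox hσ hε0 hε1 hmk (by nlinarith)
  rw [P.sum_inst_dur ε] at hdur
  refine ⟨_, Max3DM2.isMatching_fullBox hσ hε0 hε1, ?_⟩
  rw [card_map]
  have hkM : (k : ℝ) * (1 - ε) ≤ #(univ.filter (P.FullBox ε σ)) * (1 - ε) := by linarith
  exact_mod_cast le_of_mul_le_mul_right hkM (by linarith)
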